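/- arXiv:2403.00230 — 2 statements merged into one kernel-verified Lean document; each statement's English description precedes it below -/
import Mathlib

section
/- Assume M_j is reversible with respect to Π_j with ‖Π_{j-1}/Π_j‖_∞ < ∞. Let f_{j-1} ∈ L²(Π_{j-1}) be a probability density with respect to Π_{j-1} (so Π_{j-1}(f_{j-1}) = 1) and let f_j = M̄_j f_{j-1}. Then Var_j(f_j) = Var_{j-1}(f_{j-1}) − ⟨f_{j-1}, (I − Q_j) f_{j-1}⟩_{j-1}, where I is the identity operator. -/
/-!
Write `g = f r`, so that `M̄ f = M g` and, by the density relation, `Π_j(g) = Π_{j-1}(f) = 1`.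
Reversibility makes `Π_j` invariant, so `Π_j(M̄ f) = 1`, and it makes `M` self-adjoint in
`L²(Π_j)`, so `⟨f, Q f⟩_{j-1} = ⟨g, M(M̄ f)⟩_j = ⟨M g, M̄ f⟩_j = Π_j((M̄ f)²)`. Both sides of the
identity are therefore `Π_j((M̄ f)²) - 1`. Everything is computed with nonnegative
`ℝ≥0∞`-valued integrals; the bound `Π_j((M g)²) ≤ Π_j(g²) ≤ ρ Π_{j-1}(f²)` (Jensen plus
invariance) is what makes `f · Q f` integrable.
-/

open MeasureTheory ProbabilityTheory

/-- Reversibility of a kernel `M` with respect to a measure `π` (detailed balance). -/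
def IsReversible {Θ : Type*} [MeasurableSpace Θ] (M : Kernel Θ Θ) (π : Measure Θ) : Prop :=
  ∀ A B : Set Θ, MeasurableSet A → MeasurableSet B →
    ∫⁻ x in A, M x B ∂π = ∫⁻ x in B, M x A ∂π

/-- `M̄ f(u) = ∫ M(u,dv) f(v) r(v)`, where `r = Π_{j-1}/Π_j` is the density ratio. -/
noncomputable def mbar {Θ : Type*} [MeasurableSpace Θ] (M : Kernel Θ Θ) (r : Θ → ℝ)
    (f : Θ → ℝ) (u : Θ) : ℝ :=
  ∫ v, f v * r v ∂(M u)

/-- The operator `Q f(x) = ∫ M(x,dy) ∫ M(y,dz) f(z) r(z)`, i.e. `Q = M ∘ M̄`. -/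
noncomputable def Qop {Θ : Type*} [MeasurableSpace Θ] (M : Kernel Θ Θ) (r : Θ → ℝ)
    (f : Θ → ℝ) (x : Θ) : ℝ :=
  ∫ y, (∫ z, f z * r z ∂(M y)) ∂(M x)

/-- `Var_π(f) = π(f²) − π(f)²`. -/
noncomputable def varI {Θ : Type*} [MeasurableSpace Θ] (π : Measure Θ) (f : Θ → ℝ) : ℝ :=
  (∫ x, (f x) ^ 2 ∂π) - (∫ x, f x ∂π) ^ 2

open scoped ENNReal

theorem sq_lintegral_le_lintegral_sq {α : Type*} [MeasurableSpace α] {μ : Measure α}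
    [IsProbabilityMeasure μ] {g : α → ℝ≥0∞} (hg : AEMeasurable g μ) :
    (∫⁻ x, g x ∂μ) ^ 2 ≤ ∫⁻ x, g x ^ 2 ∂μ := by
  have hHolder := ENNReal.lintegral_mul_le_Lp_mul_Lq μ Real.HolderConjugate.two_two hg
    (aemeasurable_const (b := 1))
  simp only [Pi.mul_apply, mul_one, ENNReal.one_rpow, lintegral_const, measure_univ] at hHolder
  calc (∫⁻ x, g x ∂μ) ^ 2 ≤ ((∫⁻ x, g x ^ (2 : ℝ) ∂μ) ^ (1 / 2 : ℝ)) ^ 2 := by gcongr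
    _ = ∫⁻ x, g x ^ 2 ∂μ := by
      rw [← ENNReal.rpow_natCast, ← ENNReal.rpow_mul]
      norm_num

namespace IsReversible

variable {Θ : Type*} [MeasurableSpace Θ] {π : Measure Θ} {M : Kernel Θ Θ}

theorem bind_eq_self [IsMarkovKernel M] (hrev : IsReversible M π) : π.bind M = π := by
  ext A hA
  rw [Measure.bind_apply hA M.measurable.aemeasurable, ← Measure.restrict_univ (μ := π),
    ← hrev A Set.univ hA MeasurableSet.univ]
  simp

theorem lintegral_lintegral [IsMarkovKernel M] (hrev : IsReversible M π) {g : Θ → ℝ≥0∞}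
    (hg : Measurable g) : ∫⁻ x, ∫⁻ y, g y ∂M x ∂π = ∫⁻ x, g x ∂π := by
  conv_rhs => rw [← hrev.bind_eq_self]
  rw [Measure.lintegral_bind M.measurable.aemeasurable hg.aemeasurable]

theorem ae_ae_of_ae [IsMarkovKernel M] (hrev : IsReversible M π) {p : Θ → Prop}
    (h : ∀ᵐ y ∂π, p y) : ∀ᵐ x ∂π, ∀ᵐ y ∂M x, p y :=
  Measure.ae_ae_of_ae_bind M.measurable.aemeasurable (by rwa [hrev.bind_eq_self])

theorem ae_integral_toReal_eq [IsMarkovKernel M] (hrev : IsReversible M π) {h : Θ → ℝ≥0∞}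
    (hh : Measurable h) (hfin : ∀ᵐ y ∂π, h y < ∞) :
    ∀ᵐ x ∂π, ∫ y, (h y).toReal ∂M x = (∫⁻ y, h y ∂M x).toReal := by
  filter_upwards [hrev.ae_ae_of_ae hfin] with x hx using integral_toReal hh.aemeasurable hx

theorem map_swap_compProd [IsFiniteMeasure π] [IsFiniteKernel M] (hrev : IsReversible M π) :
    (π ⊗ₘ M).map Prod.swap = π ⊗ₘ M := by
  refine ext_of_generate_finite _ generateFrom_prod.symm isPiSystem_prod ?_ ?_
  · rintro _ ⟨A, hA, B, hB, rfl⟩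
    rw [Measure.map_apply measurable_swap ((hA : MeasurableSet A).prod hB),
      Set.preimage_swap_prod, Measure.compProd_apply_prod hB hA,
      Measure.compProd_apply_prod hA hB, hrev A B hA hB]
  · rw [Measure.map_apply measurable_swap MeasurableSet.univ, Set.preimage_univ]

theorem lintegral_mul_lintegral_comm [IsFiniteMeasure π] [IsFiniteKernel M]
    (hrev : IsReversible M π) {g h : Θ → ℝ≥0∞} (hg : Measurable g) (hh : Measurable h) :
    ∫⁻ x, g x * ∫⁻ y, h y ∂M x ∂π = ∫⁻ x, h x * ∫⁻ y, g y ∂M x ∂π := by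
  have h_compProd : ∀ {g h : Θ → ℝ≥0∞}, Measurable g → Measurable h →
      ∫⁻ x, g x * ∫⁻ y, h y ∂M x ∂π = ∫⁻ p, g p.1 * h p.2 ∂(π ⊗ₘ M) := fun hg hh => by
    rw [Measure.lintegral_compProd (by fun_prop)]
    simp_rw [lintegral_const_mul _ hh]
  rw [h_compProd hg hh, h_compProd hh hg]
  conv_lhs => rw [← hrev.map_swap_compProd]
  rw [lintegral_map (by fun_prop) measurable_swap]
  simp only [Prod.fst_swap, Prod.snd_swap, mul_comm]

theorem lintegral_sq_lintegral_le [IsMarkovKernel M] (hrev : IsReversible M π) {g : Θ → ℝ≥0∞}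
    (hg : Measurable g) : ∫⁻ x, (∫⁻ y, g y ∂M x) ^ 2 ∂π ≤ ∫⁻ x, g x ^ 2 ∂π :=
  calc ∫⁻ x, (∫⁻ y, g y ∂M x) ^ 2 ∂π ≤ ∫⁻ x, ∫⁻ y, g y ^ 2 ∂M x ∂π :=
        lintegral_mono fun _ => sq_lintegral_le_lintegral_sq hg.aemeasurable
    _ = ∫⁻ x, g x ^ 2 ∂π := hrev.lintegral_lintegral (hg.pow_const 2)

end IsReversible

section DensityRatio

variable {Θ : Type*} [MeasurableSpace Θ] {π : Measure Θ} {M : Kernel Θ Θ} {r f : Θ → ℝ}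

theorem mbar_eq_toReal_lintegral (hr : Measurable r) (hr0 : ∀ z, 0 ≤ r z) (hf : Measurable f)
    (hf0 : ∀ z, 0 ≤ f z) (u : Θ) :
    mbar M r f u = (∫⁻ v, ENNReal.ofReal (f v * r v) ∂M u).toReal :=
  integral_eq_lintegral_of_nonneg_ae (ae_of_all _ fun v => mul_nonneg (hf0 v) (hr0 v))
    (hf.mul hr).aestronglyMeasurable

theorem lintegral_ofReal_mul_withDensity (hr : Measurable r) (hf0 : ∀ z, 0 ≤ f z)
    (h : Θ → ℝ≥0∞) :
    ∫⁻ x, ENNReal.ofReal (f x) * h x ∂π.withDensity (fun z => ENNReal.ofReal (r z)) =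
      ∫⁻ x, ENNReal.ofReal (f x * r x) * h x ∂π := by
  rw [lintegral_withDensity_eq_lintegral_mul_non_measurable _ hr.ennreal_ofReal
    (ae_of_all _ fun _ => ENNReal.ofReal_lt_top)]
  refine lintegral_congr fun x => ?_
  rw [Pi.mul_apply, ENNReal.ofReal_mul (hf0 x)]
  ring

theorem lintegral_ofReal_mul_sq_le {ρ : ℝ} (hr : Measurable r) (hρ : ∀ z, r z ≤ ρ)
    (hf0 : ∀ z, 0 ≤ f z) :
    ∫⁻ x, ENNReal.ofReal (f x * r x) ^ 2 ∂π ≤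
      ENNReal.ofReal ρ *
        ∫⁻ x, ENNReal.ofReal (f x) ^ 2 ∂π.withDensity (fun z => ENNReal.ofReal (r z)) :=
  calc ∫⁻ x, ENNReal.ofReal (f x * r x) ^ 2 ∂π
      ≤ ∫⁻ x, ENNReal.ofReal ρ * (ENNReal.ofReal (f x * r x) * ENNReal.ofReal (f x)) ∂π := by
        refine lintegral_mono fun x => ?_
        calc ENNReal.ofReal (f x * r x) ^ 2
            = ENNReal.ofReal (f x * r x) * (ENNReal.ofReal (f x) * ENNReal.ofReal (r x)) := by
              rw [sq, ENNReal.ofReal_mul (hf0 x)]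
          _ ≤ ENNReal.ofReal (f x * r x) * (ENNReal.ofReal (f x) * ENNReal.ofReal ρ) := by
              gcongr
              exact hρ x
          _ = _ := by ring
    _ = ENNReal.ofReal ρ *
          ∫⁻ x, ENNReal.ofReal (f x) ^ 2 ∂π.withDensity (fun z => ENNReal.ofReal (r z)) := by
        rw [lintegral_const_mul' _ _ ENNReal.ofReal_ne_top]
        simp only [sq, lintegral_ofReal_mul_withDensity hr hf0]

theorem varI_mbar [IsMarkovKernel M] (hrev : IsReversible M π) (hr : Measurable r)
    (hr0 : ∀ z, 0 ≤ r z) (hf : Measurable f) (hf0 : ∀ z, 0 ≤ f z)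
    (hf_one : ∫ x, f x ∂π.withDensity (fun z => ENNReal.ofReal (r z)) = 1) :
    varI π (mbar M r f) =
      (∫⁻ x, (∫⁻ y, ENNReal.ofReal (f y * r y) ∂M x) ^ 2 ∂π).toReal - 1 := by
  set g : Θ → ℝ≥0∞ := fun v => ENNReal.ofReal (f v * r v)
  have hg : Measurable g := by fun_prop
  have hMg : Measurable fun x => ∫⁻ y, g y ∂M x := hg.lintegral_kernel
  have hg_one : ∫⁻ x, g x ∂π = 1 := by
    have h := lintegral_ofReal_mul_withDensity (π := π) hr hf0 1
    simp only [Pi.one_apply, mul_one] at h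
    rw [← h, ← ofReal_integral_eq_lintegral_ofReal
      (Integrable.of_integral_ne_zero (by simp [hf_one])) (ae_of_all _ hf0), hf_one,
      ENNReal.ofReal_one]
  have hMg_one : ∫⁻ x, ∫⁻ y, g y ∂M x ∂π = 1 := (hrev.lintegral_lintegral hg).trans hg_one
  have hMg_fin : ∀ᵐ x ∂π, ∫⁻ y, g y ∂M x < ∞ := ae_lt_top hMg (by simp [hMg_one])
  simp only [varI, mbar_eq_toReal_lintegral hr hr0 hf hf0, ← ENNReal.toReal_pow]
  rw [integral_toReal hMg.aemeasurable hMg_fin, hMg_one,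
    integral_toReal (hMg.pow_const 2).aemeasurable
      (by filter_upwards [hMg_fin] with x hx using ENNReal.pow_lt_top hx)]
  simp

theorem integral_mul_Qop [IsFiniteMeasure π] [IsMarkovKernel M] (hrev : IsReversible M π)
    (hr : Measurable r) (hr0 : ∀ z, 0 ≤ r z) (hf : Measurable f) (hf0 : ∀ z, 0 ≤ f z)
    (hS : ∫⁻ x, (∫⁻ y, ENNReal.ofReal (f y * r y) ∂M x) ^ 2 ∂π ≠ ∞) :
    Integrable (fun x => f x * Qop M r f x) (π.withDensity fun z => ENNReal.ofReal (r z)) ∧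
      ∫ x, f x * Qop M r f x ∂π.withDensity (fun z => ENNReal.ofReal (r z)) =
        (∫⁻ x, (∫⁻ y, ENNReal.ofReal (f y * r y) ∂M x) ^ 2 ∂π).toReal := by
  set g : Θ → ℝ≥0∞ := fun v => ENNReal.ofReal (f v * r v)
  have hg : Measurable g := by fun_prop
  have hMg : Measurable fun x => ∫⁻ y, g y ∂M x := hg.lintegral_kernel
  have hMg_fin : ∀ᵐ x ∂π, ∫⁻ y, g y ∂M x < ∞ := by
    filter_upwards [ae_lt_top (hMg.pow_const 2) hS] with x hx
    exact (ENNReal.pow_lt_top_iff.1 hx).resolve_right two_ne_zero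
  have hQ : (fun x => f x * Qop M r f x) =ᵐ[π.withDensity fun z => ENNReal.ofReal (r z)]
      fun x => (ENNReal.ofReal (f x) * ∫⁻ y, ∫⁻ z, g z ∂M y ∂M x).toReal := by
    refine (withDensity_absolutelyContinuous _ _).ae_le ?_
    filter_upwards [hrev.ae_integral_toReal_eq hMg hMg_fin] with x hx
    change f x * ∫ y, mbar M r f y ∂M x = _
    simp_rw [mbar_eq_toReal_lintegral hr hr0 hf hf0]
    rw [hx, ENNReal.toReal_mul, ENNReal.toReal_ofReal (hf0 x)]
  have hfQ : ∫⁻ x, ENNReal.ofReal (f x) * ∫⁻ y, ∫⁻ z, g z ∂M y ∂M x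
      ∂π.withDensity (fun z => ENNReal.ofReal (r z)) = ∫⁻ x, (∫⁻ y, g y ∂M x) ^ 2 ∂π := by
    rw [lintegral_ofReal_mul_withDensity hr hf0,
      hrev.lintegral_mul_lintegral_comm hg hMg]
    simp only [sq]
  have hfQ_meas : Measurable fun x => ENNReal.ofReal (f x) * ∫⁻ y, ∫⁻ z, g z ∂M y ∂M x := by
    fun_prop
  rw [← hfQ] at hS
  refine ⟨(integrable_toReal_of_lintegral_ne_top hfQ_meas.aemeasurable hS).congr hQ.symm, ?_⟩
  rw [integral_congr_ae hQ, integral_toReal hfQ_meas.aemeasurable (ae_lt_top hfQ_meas hS), hfQ]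

end DensityRatio

theorem variance_identity_general
    {Θ : Type*} [MeasurableSpace Θ]
    (πprev πcur : Measure Θ)
    (hπcur : IsProbabilityMeasure πcur)
    (M : Kernel Θ Θ) (hM : IsMarkovKernel M)
    (hrev : IsReversible M πcur)
    (r : Θ → ℝ) (hrmeas : Measurable r) (hrnonneg : ∀ z, 0 ≤ r z)
    (hdens : πprev = πcur.withDensity (fun z => ENNReal.ofReal (r z)))
    (ρ : ℝ) (hρ : ∀ z, r z ≤ ρ)
    (f : Θ → ℝ) (hfmeas : Measurable f) (hfnonneg : ∀ x, 0 ≤ f x)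
    (hfL2 : Integrable (fun x => (f x) ^ 2) πprev)
    (hfdens : (∫ x, f x ∂πprev) = 1) :
    varI πcur (mbar M r f) =
      varI πprev f - ∫ x, f x * (f x - Qop M r f x) ∂πprev := by
  have hS : ∫⁻ x, (∫⁻ y, ENNReal.ofReal (f y * r y) ∂M x) ^ 2 ∂πcur ≠ ∞ := by
    have hf_sq : ∫⁻ x, ENNReal.ofReal (f x) ^ 2 ∂πprev < ∞ := by
      simpa only [ENNReal.ofReal_pow (hfnonneg _)] using hfL2.lintegral_lt_top
    rw [hdens] at hf_sq
    refine ((hrev.lintegral_sq_lintegral_le (by fun_prop)).trans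
      (lintegral_ofReal_mul_sq_le hrmeas hρ hfnonneg)).trans_lt ?_ |>.ne
    exact ENNReal.mul_lt_top ENNReal.ofReal_lt_top hf_sq
  obtain ⟨hfQ_int, hfQ⟩ := hdens ▸ integral_mul_Qop hrev hrmeas hrnonneg hfmeas hfnonneg hS
  have hsplit : ∫ x, f x * (f x - Qop M r f x) ∂πprev =
      ∫ x, f x ^ 2 ∂πprev - ∫ x, f x * Qop M r f x ∂πprev := by
    simp_rw [mul_sub, ← sq]
    exact integral_sub hfL2 hfQ_int
  rw [varI_mbar hrev hrmeas hrnonneg hfmeas hfnonneg (hdens ▸ hfdens), varI, hsplit, hfQ, hfdens]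
  ring

theorem variance_identity
    {Θ : Type*} [MeasurableSpace Θ]
    (πprev πcur : Measure Θ)
    (hπprev : IsProbabilityMeasure πprev) (hπcur : IsProbabilityMeasure πcur)
    (M : Kernel Θ Θ) (hM : IsMarkovKernel M)
    (hrev : IsReversible M πcur)
    (r : Θ → ℝ) (hrmeas : Measurable r) (hrnonneg : ∀ z, 0 ≤ r z)
    (hdens : πprev = πcur.withDensity (fun z => ENNReal.ofReal (r z)))
    (ρ : ℝ) (hρ : ∀ z, r z ≤ ρ)
    (f : Θ → ℝ) (hfmeas : Measurable f) (hfnonneg : ∀ x, 0 ≤ f x)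
    (hfL2 : Integrable (fun x => (f x) ^ 2) πprev)
    (hfdens : (∫ x, f x ∂πprev) = 1) :
    varI πcur (mbar M r f) =
      varI πprev f - ∫ x, f x * (f x - Qop M r f x) ∂πprev :=
  variance_identity_general πprev πcur hπcur M hM hrev r hrmeas hrnonneg hdens ρ hρ f hfmeas
    hfnonneg hfL2 hfdens
end

section
/- Let {M_t, 0 ≤ t ≤ L} be Markov kernels on Θ and Π a probability measure. Suppose there exist constants 0 < ω < 1 and T ∈ ℕ, T < L, such that the composed kernel ∏_{t=0}^{T} M_t admits the mixture decomposition ∏_{t=0}^{T} M_t(θ, ·) = ω H(·) + (1 − ω) R_T(θ, ·) for every θ, where H is a probability measure and R_T a Markov kernel. Then for every θ, ‖ ∏_{s=0}^{L} M_s(θ, ·) − Π ‖_tv ≤ ‖ H ∏_{s=T+1}^{L} M_s − Π ‖_tv + 2(1 − ω). -/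
/-!
Pushing a measure through the kernels `M_{T+1}, …, M_L` is linear, so the law at time `L`
is the mixture `ω (H ∏ M_s) + (1 - ω) (R_T(θ, ·) ∏ M_s)`. Total variation to `Π` is convex in
its first argument; the first component contributes at most `‖H ∏ M_s − Π‖_tv`, the second at
most `2 (1 - ω)`, as the total variation distance between probability measures is at most `2`.
-/

open MeasureTheory ProbabilityTheory

/-- Total variation distance `‖μ − ν‖_tv = sup_{f : |f| ≤ 1} |μ(f) − ν(f)|`. -/
noncomputable def tvDist {Θ : Type*} [MeasurableSpace Θ] (μ ν : Measure Θ) : ℝ :=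
  sSup {r : ℝ | ∃ f : Θ → ℝ, Measurable f ∧ (∀ x, |f x| ≤ 1) ∧
    r = |(∫ x, f x ∂μ) - ∫ x, f x ∂ν|}

/-- `composeK M n θ = (M_0 M_1 ⋯ M_n)(θ, ·)`, the law after applying kernels `M_0,…,M_n`
starting from `θ`. -/
noncomputable def composeK {Θ : Type*} [MeasurableSpace Θ] (M : ℕ → Kernel Θ Θ) :
    ℕ → Θ → Measure Θ
  | 0, θ => M 0 θ
  | n + 1, θ => (composeK M n θ).bind (fun y => M (n + 1) y)

/-- `runFrom M μ a n`: the law obtained from `μ` after applying kernels `M_{a+1},…,M_{a+n}`. -/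
noncomputable def runFrom {Θ : Type*} [MeasurableSpace Θ] (M : ℕ → Kernel Θ Θ)
    (μ : Measure Θ) (a : ℕ) : ℕ → Measure Θ
  | 0 => μ
  | n + 1 => (runFrom M μ a n).bind (fun y => M (a + n + 1) y)

section Chain

variable {Θ : Type*} [MeasurableSpace Θ] (M : ℕ → Kernel Θ Θ)

lemma composeK_add_eq_runFrom (T n : ℕ) (θ : Θ) :
    composeK M (T + n) θ = runFrom M (composeK M T θ) T n := by
  induction n with
  | zero => rfl
  | succ n ih =>
    show M (T + n + 1) ∘ₘ composeK M (T + n) θ = M (T + n + 1) ∘ₘ runFrom M (composeK M T θ) T n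
    rw [ih]

instance isProbabilityMeasure_runFrom [∀ t, IsMarkovKernel (M t)] (μ : Measure Θ)
    [IsProbabilityMeasure μ] (a n : ℕ) : IsProbabilityMeasure (runFrom M μ a n) := by
  induction n with
  | zero => assumption
  | succ n ih => exact inferInstanceAs (IsProbabilityMeasure (M (a + n + 1) ∘ₘ runFrom M μ a n))

lemma runFrom_add (μ ν : Measure Θ) (a n : ℕ) :
    runFrom M (μ + ν) a n = runFrom M μ a n + runFrom M ν a n := by
  induction n with
  | zero => rfl
  | succ n ih =>
    show M (a + n + 1) ∘ₘ runFrom M (μ + ν) a n = _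
    rw [ih, Measure.comp_add]
    rfl

lemma runFrom_smul (c : ENNReal) (μ : Measure Θ) (a n : ℕ) :
    runFrom M (c • μ) a n = c • runFrom M μ a n := by
  induction n with
  | zero => rfl
  | succ n ih =>
    show M (a + n + 1) ∘ₘ runFrom M (c • μ) a n = _
    rw [ih, Measure.comp_smul]
    rfl

end Chain

section TotalVariation

variable {Θ : Type*} [MeasurableSpace Θ]

lemma Measurable.integrable_of_abs_le_one {μ : Measure Θ} [IsFiniteMeasure μ] {f : Θ → ℝ}
    (hf : Measurable f) (hb : ∀ x, |f x| ≤ 1) : Integrable f μ :=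
  .of_bound hf.aestronglyMeasurable 1
    (ae_of_all _ fun x => (Real.norm_eq_abs (f x)).trans_le (hb x))

lemma abs_integral_le_one_of_abs_le_one (μ : Measure Θ) [IsProbabilityMeasure μ] {f : Θ → ℝ}
    (hb : ∀ x, |f x| ≤ 1) : |∫ x, f x ∂μ| ≤ 1 := by
  simpa using norm_integral_le_of_norm_le_const (μ := μ) (C := 1)
    (ae_of_all _ fun x => (Real.norm_eq_abs (f x)).trans_le (hb x))

lemma abs_integral_sub_integral_le_two (μ ν : Measure Θ) [IsProbabilityMeasure μ]
    [IsProbabilityMeasure ν] {f : Θ → ℝ} (hb : ∀ x, |f x| ≤ 1) :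
    |(∫ x, f x ∂μ) - ∫ x, f x ∂ν| ≤ 2 := by
  have := abs_integral_le_one_of_abs_le_one μ hb
  have := abs_integral_le_one_of_abs_le_one ν hb
  linarith [abs_sub (∫ x, f x ∂μ) (∫ x, f x ∂ν)]

lemma tvDist_le_of_forall {μ ν : Measure Θ} {c : ℝ}
    (h : ∀ f : Θ → ℝ, Measurable f → (∀ x, |f x| ≤ 1) → |(∫ x, f x ∂μ) - ∫ x, f x ∂ν| ≤ c) :
    tvDist μ ν ≤ c :=
  csSup_le ⟨0, 0, measurable_const, by simp, by simp⟩ fun _ ⟨f, hf, hb, hr⟩ => hr ▸ h f hf hb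

lemma tvDist_le_two (μ ν : Measure Θ) [IsProbabilityMeasure μ] [IsProbabilityMeasure ν] :
    tvDist μ ν ≤ 2 :=
  tvDist_le_of_forall fun _ _ hb => abs_integral_sub_integral_le_two μ ν hb

lemma abs_integral_sub_integral_le_tvDist (μ ν : Measure Θ) [IsProbabilityMeasure μ]
    [IsProbabilityMeasure ν] {f : Θ → ℝ} (hf : Measurable f) (hb : ∀ x, |f x| ≤ 1) :
    |(∫ x, f x ∂μ) - ∫ x, f x ∂ν| ≤ tvDist μ ν :=
  le_csSup ⟨2, fun _ ⟨_, _, hb', hr⟩ => hr ▸ abs_integral_sub_integral_le_two μ ν hb'⟩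
    ⟨f, hf, hb, rfl⟩

lemma tvDist_nonneg (μ ν : Measure Θ) [IsProbabilityMeasure μ] [IsProbabilityMeasure ν] :
    0 ≤ tvDist μ ν :=
  (abs_nonneg _).trans (abs_integral_sub_integral_le_tvDist μ ν measurable_const
    (f := fun _ => 0) (by simp))

lemma integral_ofReal_smul_add_ofReal_smul {μ ν : Measure Θ} {f : Θ → ℝ}
    (hμ : Integrable f μ) (hν : Integrable f ν) {a b : ℝ} (ha : 0 ≤ a) (hb : 0 ≤ b) :
    ∫ x, f x ∂(ENNReal.ofReal a • μ + ENNReal.ofReal b • ν) =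
      a * ∫ x, f x ∂μ + b * ∫ x, f x ∂ν := by
  rw [integral_add_measure (hμ.smul_measure ENNReal.ofReal_ne_top)
      (hν.smul_measure ENNReal.ofReal_ne_top), integral_smul_measure, integral_smul_measure,
    ENNReal.toReal_ofReal ha, ENNReal.toReal_ofReal hb, smul_eq_mul, smul_eq_mul]

lemma tvDist_ofReal_smul_add_ofReal_smul_le (μ ν π : Measure Θ) [IsProbabilityMeasure μ]
    [IsProbabilityMeasure ν] [IsProbabilityMeasure π] {a : ℝ} (ha0 : 0 ≤ a) (ha1 : a ≤ 1) :
    tvDist (ENNReal.ofReal a • μ + ENNReal.ofReal (1 - a) • ν) π ≤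
      a * tvDist μ π + (1 - a) * tvDist ν π := by
  refine tvDist_le_of_forall fun f hf hb => ?_
  have hπ : ∫ x, f x ∂π = a * ∫ x, f x ∂π + (1 - a) * ∫ x, f x ∂π := by ring
  rw [integral_ofReal_smul_add_ofReal_smul (hf.integrable_of_abs_le_one hb)
    (hf.integrable_of_abs_le_one hb) ha0 (sub_nonneg.mpr ha1), hπ]
  calc |a * ∫ x, f x ∂μ + (1 - a) * ∫ x, f x ∂ν - (a * ∫ x, f x ∂π + (1 - a) * ∫ x, f x ∂π)|
      = |a * ((∫ x, f x ∂μ) - ∫ x, f x ∂π) + (1 - a) * ((∫ x, f x ∂ν) - ∫ x, f x ∂π)| := by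
        ring_nf
    _ ≤ a * |(∫ x, f x ∂μ) - ∫ x, f x ∂π| + (1 - a) * |(∫ x, f x ∂ν) - ∫ x, f x ∂π| := by
        refine (abs_add_le _ _).trans_eq ?_
        rw [abs_mul, abs_mul, abs_of_nonneg ha0, abs_of_nonneg (sub_nonneg.mpr ha1)]
    _ ≤ a * tvDist μ π + (1 - a) * tvDist ν π :=
        add_le_add
          (mul_le_mul_of_nonneg_left (abs_integral_sub_integral_le_tvDist μ π hf hb) ha0)
          (mul_le_mul_of_nonneg_left (abs_integral_sub_integral_le_tvDist ν π hf hb)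
            (sub_nonneg.mpr ha1))

end TotalVariation

theorem truncation_remark
    {Θ : Type*} [MeasurableSpace Θ]
    (M : ℕ → Kernel Θ Θ) (hM : ∀ t, IsMarkovKernel (M t))
    (Pi : Measure Θ) (hPi : IsProbabilityMeasure Pi)
    (L T : ℕ) (hTL : T < L)
    (ω : ℝ) (hω0 : 0 < ω) (hω1 : ω < 1)
    (H : Measure Θ) (hH : IsProbabilityMeasure H)
    (R : Kernel Θ Θ) (hR : IsMarkovKernel R)
    (hdecomp : ∀ θ : Θ, composeK M T θ =
      ENNReal.ofReal ω • H + ENNReal.ofReal (1 - ω) • R θ) :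
    ∀ θ : Θ, tvDist (composeK M L θ) Pi ≤
      tvDist (runFrom M H T (L - T)) Pi + 2 * (1 - ω) := by
  intro θ
  obtain ⟨n, rfl⟩ : ∃ n, L = T + n := ⟨L - T, by omega⟩
  rw [composeK_add_eq_runFrom, hdecomp θ, runFrom_add, runFrom_smul, runFrom_smul,
    Nat.add_sub_cancel_left]
  have := hM
  calc _ ≤ ω * tvDist (runFrom M H T n) Pi + (1 - ω) * tvDist (runFrom M (R θ) T n) Pi :=
        tvDist_ofReal_smul_add_ofReal_smul_le _ _ _ hω0.le hω1.le
    _ ≤ tvDist (runFrom M H T n) Pi + 2 * (1 - ω) := by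
        nlinarith [tvDist_nonneg (runFrom M H T n) Pi, tvDist_le_two (runFrom M (R θ) T n) Pi]
end
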